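/- arXiv:2409.00979 — 4 statements merged into one kernel-verified Lean document; each statement's English description precedes it below -/
import Mathlib

section
/- Let 𝒳 be a finite nonempty set and for each x ∈ 𝒳 let f(x) be Gaussian with mean μ(x) and standard deviation σ(x) ≥ 0. Pick δ ∈ (0,1) and set β = 2·log(|𝒳|/(2δ)). Then Pr(∀ x ∈ 𝒳, f(x) ≤ μ(x) + √β·σ(x)) ≥ 1 − δ. -/
open MeasureTheory ProbabilityTheory Real
open scoped ENNReal NNReal

lemma std_gaussian_tail {c : ℝ} (hc : 0 ≤ c) :
    gaussianReal 0 1 (Set.Ioi c) ≤ ENNReal.ofReal (Real.exp (-c ^ 2 / 2) / 2) := by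
  rw [gaussianReal_apply_eq_integral _ one_ne_zero]
  refine ENNReal.ofReal_le_ofReal ?_
  have hpre : (fun x : ℝ => x + c) ⁻¹' Set.Ioi c = Set.Ioi 0 := by
    ext x; simp
  have htrans : ∫ x in Set.Ioi c, gaussianPDFReal 0 1 x
      = ∫ x in Set.Ioi (0 : ℝ), gaussianPDFReal 0 1 (x + c) := by
    rw [← (measurePreserving_add_right (volume : Measure ℝ) c).setIntegral_preimage_emb
      (MeasurableEquiv.addRight c).measurableEmbedding (gaussianPDFReal 0 1) (Set.Ioi c), hpre]
  rw [htrans]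
  have hb : (0 : ℝ) < 1 / 2 := by norm_num
  have hint2 : IntegrableOn (fun x : ℝ => Real.exp (-c ^ 2 / 2) * ((√(2 * π))⁻¹ *
      Real.exp (-(1 / 2) * x ^ 2))) (Set.Ioi 0) := by
    exact (((integrable_exp_neg_mul_sq hb).const_mul _).const_mul _).integrableOn
  have hint1 : IntegrableOn (fun x : ℝ => gaussianPDFReal 0 1 (x + c)) (Set.Ioi 0) := by
    have : Integrable (fun x : ℝ => gaussianPDFReal 0 1 (x + c)) :=
      (integrable_gaussianPDFReal 0 1).comp_add_right c
    exact this.integrableOn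
  have hmono : ∫ x in Set.Ioi (0 : ℝ), gaussianPDFReal 0 1 (x + c)
      ≤ ∫ x in Set.Ioi (0 : ℝ), Real.exp (-c ^ 2 / 2) * ((√(2 * π))⁻¹ *
        Real.exp (-(1 / 2) * x ^ 2)) := by
    refine setIntegral_mono_on hint1 hint2 measurableSet_Ioi ?_
    intro x hx
    have hx0 : 0 ≤ x := le_of_lt hx
    unfold gaussianPDFReal
    simp only [NNReal.coe_one, mul_one, sub_zero]
    rw [mul_comm (Real.exp (-c ^ 2 / 2)) _, mul_assoc, ← Real.exp_add]
    refine mul_le_mul_of_nonneg_left ?_ (by positivity)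
    refine Real.exp_le_exp.mpr ?_
    nlinarith [mul_nonneg hx0 hc]
  refine hmono.trans ?_
  rw [integral_const_mul, integral_const_mul, integral_gaussian_Ioi]
  have h2π : (0 : ℝ) < √(2 * π) := Real.sqrt_pos.mpr (by positivity)
  have hs : √(π / (1 / 2)) = √(2 * π) := by norm_num [mul_comm]
  rw [hs]
  rw [div_eq_mul_inv (Real.exp (-c ^ 2 / 2)) 2]
  refine le_of_eq ?_
  field_simp

lemma gaussian_tail (m s c : ℝ) (hs : 0 ≤ s) (hc : 0 ≤ c) :
    gaussianReal m ⟨s ^ 2, sq_nonneg _⟩ (Set.Ioi (m + c * s))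
      ≤ ENNReal.ofReal (Real.exp (-c ^ 2 / 2) / 2) := by
  rcases eq_or_lt_of_le hs with h0 | h0
  · have hv : (⟨s ^ 2, sq_nonneg _⟩ : NNReal) = 0 := by
      ext; simp [← h0]
    have hd : gaussianReal m ⟨s ^ 2, sq_nonneg _⟩ = Measure.dirac m := by
      rw [← gaussianReal_zero_var m]; congr 1
    rw [hd, Measure.dirac_apply' _ measurableSet_Ioi]
    have hm : m ∉ Set.Ioi (m + c * s) := by simp [← h0]
    simp [Set.indicator_of_notMem hm]
  · have hmap1 : (gaussianReal 0 1).map (fun x => s * x) = gaussianReal 0 ⟨s ^ 2, sq_nonneg _⟩ := by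
      have := gaussianReal_map_const_mul (μ := 0) (v := 1) s
      simp at this
      convert this using 2
      congr 1
    have hmap2 : (gaussianReal 0 ⟨s ^ 2, sq_nonneg _⟩).map (fun x => x + m)
        = gaussianReal m ⟨s ^ 2, sq_nonneg _⟩ := by
      have := gaussianReal_map_add_const (μ := 0) (v := ⟨s ^ 2, sq_nonneg _⟩) m
      simpa using this
    rw [← hmap2, ← hmap1, Measure.map_map (measurable_add_const m)
      (measurable_const_mul s),
      Measure.map_apply ((measurable_add_const m).comp (measurable_const_mul s))
        measurableSet_Ioi]
    have hpre : ((fun x => x + m) ∘ (fun x : ℝ => s * x)) ⁻¹' Set.Ioi (m + c * s)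
        = Set.Ioi c := by
      ext x
      simp only [Set.mem_preimage, Set.mem_Ioi, Function.comp_apply]
      constructor
      · intro h
        have h2 : s * c < s * x := by nlinarith
        exact lt_of_mul_lt_mul_left h2 hs
      · intro h
        nlinarith
    rw [hpre]
    exact std_gaussian_tail hc

theorem gaussian_union_ucb {Ω : Type*} [MeasureSpace Ω] (P : Measure Ω) [IsProbabilityMeasure P]
    {𝒳 : Type*} [Fintype 𝒳] [Nonempty 𝒳]
    (f : 𝒳 → Ω → ℝ) (hf : ∀ x, Measurable (f x))
    (μ σ : 𝒳 → ℝ) (hσ : ∀ x, 0 ≤ σ x)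
    (hlaw : ∀ x, P.map (f x) = gaussianReal (μ x) ⟨(σ x) ^ 2, sq_nonneg _⟩)
    (δ : ℝ) (hδ : δ ∈ Set.Ioo (0 : ℝ) 1)
    (β : ℝ) (hβ : β = 2 * Real.log ((Fintype.card 𝒳 : ℝ) / (2 * δ))) :
    1 - ENNReal.ofReal δ ≤ P {ω | ∀ x, f x ω ≤ μ x + Real.sqrt β * σ x} := by
  obtain ⟨hδ0, hδ1⟩ := hδ
  set N : ℝ := (Fintype.card 𝒳 : ℝ) with hN
  have hN1 : 1 ≤ N := by
    have h : 1 ≤ Fintype.card 𝒳 := Fintype.card_pos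
    rw [hN]
    exact_mod_cast h
  have hN0 : 0 < N := lt_of_lt_of_le one_pos hN1
  have hkey : Real.exp (-(Real.sqrt β) ^ 2 / 2) / 2 ≤ δ / N := by
    rcases le_or_gt 0 β with hb | hb
    · rw [Real.sq_sqrt hb, hβ]
      have ha : (0 : ℝ) < N / (2 * δ) := by positivity
      have hl : -(2 * Real.log (N / (2 * δ))) / 2 = Real.log ((N / (2 * δ))⁻¹) := by
        rw [Real.log_inv]; ring
      rw [hl, Real.exp_log (by positivity), inv_div]
      refine le_of_eq ?_
      field_simp
    · rw [Real.sqrt_eq_zero_of_nonpos hb.le]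
      norm_num
      have hlog : Real.log (N / (2 * δ)) < 0 := by nlinarith [hβ ▸ hb]
      have hlt : N / (2 * δ) < 1 := by
        have := (Real.log_neg_iff (by positivity : (0:ℝ) < N / (2 * δ))).mp hlog
        exact this
      have hN2δ : N < 2 * δ := by
        rw [div_lt_one (by positivity)] at hlt
        exact hlt
      rw [le_div_iff₀ hN0]
      nlinarith
  set A : 𝒳 → Set Ω := fun x => {ω | μ x + Real.sqrt β * σ x < f x ω} with hA
  have hAmeas : ∀ x, MeasurableSet (A x) := fun x => hf x measurableSet_Ioi
  have hPx : ∀ x, P (A x) ≤ ENNReal.ofReal (δ / N) := by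
    intro x
    have heq : P (A x) = (P.map (f x)) (Set.Ioi (μ x + Real.sqrt β * σ x)) := by
      rw [Measure.map_apply (hf x) measurableSet_Ioi]
      rfl
    rw [heq, hlaw x]
    exact le_trans (gaussian_tail (μ x) (σ x) (Real.sqrt β) (hσ x) (Real.sqrt_nonneg β))
      (ENNReal.ofReal_le_ofReal hkey)
  have hUnion : P (⋃ x, A x) ≤ ENNReal.ofReal δ := by
    refine le_trans (measure_iUnion_fintype_le P A) ?_
    calc ∑ x, P (A x) ≤ ∑ _x : 𝒳, ENNReal.ofReal (δ / N) :=
          Finset.sum_le_sum (fun x _ => hPx x)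
      _ = (Fintype.card 𝒳 : ℝ≥0∞) * ENNReal.ofReal (δ / N) := by
          rw [Finset.sum_const, nsmul_eq_mul]
          simp
      _ = ENNReal.ofReal δ := by
          rw [show ((Fintype.card 𝒳 : ℝ≥0∞)) = ENNReal.ofReal N by
            rw [hN]; simp, ← ENNReal.ofReal_mul hN0.le]
          congr 1
          field_simp
  have hcompl : {ω | ∀ x, f x ω ≤ μ x + Real.sqrt β * σ x} = (⋃ x, A x)ᶜ := by
    ext ω
    simp [hA, not_lt]
  rw [hcompl, prob_compl_eq_one_sub (MeasurableSet.iUnion hAmeas)]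
  exact tsub_le_tsub_left hUnion 1
end

section
/- Let X be a real random variable with CDF F, and let g: (0,1) → ℝ be a function such that F(g(δ)) ≥ 1 − δ for all δ ∈ (0,1). If U ~ Uniform(0,1), then E[g(U)] ≥ E[X] whenever both expectations exist. -/
open MeasureTheory ProbabilityTheory Real
open scoped ENNReal

private lemma ofReal_max_zero (x : ℝ) :
    ENNReal.ofReal (max x 0) = ENNReal.ofReal x := by
  rcases le_total x 0 with h | h
  · rw [max_eq_right h, ENNReal.ofReal_zero, ENNReal.ofReal_of_nonpos h]
  · rw [max_eq_left h]

/-- Tail representation of the lintegral of the positive part. -/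
private lemma tail_rep {Ω : Type*} [MeasurableSpace Ω] (P : Measure Ω)
    {f : Ω → ℝ} (hf : AEMeasurable f P) :
    ∫⁻ ω, ENNReal.ofReal (f ω) ∂P = ∫⁻ t in Set.Ioi (0:ℝ), P {a | t < f a} := by
  have h := lintegral_eq_lintegral_meas_lt P (f := fun ω => max (f ω) 0)
    (Filter.Eventually.of_forall fun ω => le_max_right _ _)
    (hf.max aemeasurable_const)
  have hL : ∫⁻ ω, ENNReal.ofReal (max (f ω) 0) ∂P = ∫⁻ ω, ENNReal.ofReal (f ω) ∂P := by
    simp_rw [ofReal_max_zero]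
  have hR : ∫⁻ t in Set.Ioi (0:ℝ), P {a | t < max (f a) 0}
      = ∫⁻ t in Set.Ioi (0:ℝ), P {a | t < f a} := by
    apply setLIntegral_congr_fun measurableSet_Ioi
    intro t ht
    show P {a | t < max (f a) 0} = P {a | t < f a}
    congr 1
    ext a
    simp only [Set.mem_setOf_eq, lt_max_iff]
    exact ⟨fun h' => h'.resolve_right (lt_asymm ht), Or.inl⟩
  rw [← hL, h, hR]

/-- If a.e. on `A`, points with `U ω ∈ (0,1)` satisfy `1 - c ≤ U ω`, then `P A ≤ c`. -/
private lemma key_dom {Ω : Type*} [MeasurableSpace Ω] (P : Measure Ω)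
    [IsProbabilityMeasure P] (U : Ω → ℝ) (hU : Measurable U)
    (hUlaw : P.map U = volume.restrict (Set.Ioo (0 : ℝ) 1))
    (A : Set Ω) (c : ℝ)
    (h : ∀ ω, U ω ∈ Set.Ioo (0:ℝ) 1 → ω ∈ A → 1 - c ≤ U ω) :
    P A ≤ ENNReal.ofReal c := by
  have hsub : A ⊆ (U ⁻¹' (Set.Ioo (0:ℝ) 1)ᶜ) ∪ (U ⁻¹' (Set.Ioo (0:ℝ) 1 ∩ Set.Ici (1 - c))) := by
    intro ω hω
    by_cases hmem : U ω ∈ Set.Ioo (0:ℝ) 1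
    · exact Or.inr ⟨hmem, h ω hmem hω⟩
    · exact Or.inl hmem
  have h1 : P (U ⁻¹' (Set.Ioo (0:ℝ) 1)ᶜ) = 0 := by
    rw [← Measure.map_apply hU (measurableSet_Ioo.compl), hUlaw,
      Measure.restrict_apply measurableSet_Ioo.compl]
    simp
  have h2 : P (U ⁻¹' (Set.Ioo (0:ℝ) 1 ∩ Set.Ici (1 - c))) ≤ ENNReal.ofReal c := by
    rw [← Measure.map_apply hU (measurableSet_Ioo.inter measurableSet_Ici), hUlaw,
      Measure.restrict_apply (measurableSet_Ioo.inter measurableSet_Ici)]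
    calc volume ((Set.Ioo (0:ℝ) 1 ∩ Set.Ici (1 - c)) ∩ Set.Ioo 0 1)
        ≤ volume (Set.Icc (1 - c) 1) := by
          apply measure_mono
          intro x hx
          exact ⟨hx.1.2, hx.1.1.2.le⟩
      _ = ENNReal.ofReal c := by rw [Real.volume_Icc]; norm_num
  calc P A ≤ P ((U ⁻¹' (Set.Ioo (0:ℝ) 1)ᶜ) ∪ (U ⁻¹' (Set.Ioo (0:ℝ) 1 ∩ Set.Ici (1 - c)))) :=
        measure_mono hsub
    _ ≤ P (U ⁻¹' (Set.Ioo (0:ℝ) 1)ᶜ) + P (U ⁻¹' (Set.Ioo (0:ℝ) 1 ∩ Set.Ici (1 - c))) :=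
        measure_union_le _ _
    _ ≤ ENNReal.ofReal c := by rw [h1, zero_add]; exact h2

theorem quantile_bound_expectation {Ω : Type*} [MeasureSpace Ω]
    (P : Measure Ω) [IsProbabilityMeasure P]
    (X : Ω → ℝ) (hX : Measurable X)
    (U : Ω → ℝ) (hU : Measurable U)
    (hUlaw : P.map U = volume.restrict (Set.Ioo (0 : ℝ) 1))
    (g : ℝ → ℝ)
    (hg : ∀ δ ∈ Set.Ioo (0 : ℝ) 1, 1 - δ ≤ cdf (P.map X) (g δ))
    (hXint : Integrable X P)
    (hgint : Integrable (fun ω => g (U ω)) P) :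
    ∫ ω, X ω ∂P ≤ ∫ ω, g (U ω) ∂P := by
  set Y : Ω → ℝ := fun ω => g (U ω) with hY
  haveI : IsProbabilityMeasure (P.map X) := Measure.isProbabilityMeasure_map hX.aemeasurable
  -- rewrite cdf in terms of P
  have hcdf : ∀ x : ℝ, cdf (P.map X) x = (P {a | X a ≤ x}).toReal := by
    intro x
    rw [cdf_eq_real, measureReal_def, Measure.map_apply hX measurableSet_Iic]
    rfl
  -- stochastic dominance (≤ version)
  have hdom_le : ∀ t : ℝ, P {ω | Y ω ≤ t} ≤ P {a | X a ≤ t} := by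
    intro t
    have := key_dom P U hU hUlaw {ω | Y ω ≤ t} ((P {a | X a ≤ t}).toReal) ?_
    · refine this.trans_eq (ENNReal.ofReal_toReal (measure_ne_top _ _))
    · intro ω hmem hω
      have h1 := hg (U ω) hmem
      have h2 : cdf (P.map X) (g (U ω)) ≤ (P {a | X a ≤ t}).toReal := by
        rw [← hcdf t]
        exact monotone_cdf (μ := P.map X) (show g (U ω) ≤ t from hω)
      linarith
  -- stochastic dominance (< version)
  have hdom_lt : ∀ s : ℝ, P {ω | Y ω < s} ≤ P {a | X a < s} := by
    intro s
    have := key_dom P U hU hUlaw {ω | Y ω < s} ((P {a | X a < s}).toReal) ?_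
    · refine this.trans_eq (ENNReal.ofReal_toReal (measure_ne_top _ _))
    · intro ω hmem hω
      have h1 := hg (U ω) hmem
      have h2 : cdf (P.map X) (g (U ω)) ≤ (P {a | X a < s}).toReal := by
        rw [hcdf (g (U ω))]
        apply ENNReal.toReal_mono (measure_ne_top _ _)
        apply measure_mono
        intro a ha
        exact lt_of_le_of_lt ha (show g (U ω) < s from hω)
      linarith
  have hYmeas : AEMeasurable Y P := hgint.aemeasurable
  -- tail comparison for positive parts
  have hpos : ∫⁻ ω, ENNReal.ofReal (X ω) ∂P ≤ ∫⁻ ω, ENNReal.ofReal (Y ω) ∂P := by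
    rw [tail_rep P hX.aemeasurable, tail_rep P hYmeas]
    apply lintegral_mono fun t => ?_
    -- P {a | t < X a} ≤ P {a | t < Y a}
    have hXc : P {a | t < X a} = 1 - P {a | X a ≤ t} := by
      have : {a | t < X a} = {a | X a ≤ t}ᶜ := by ext a; simp
      rw [this, measure_compl (show MeasurableSet {a | X a ≤ t} from hX measurableSet_Iic) (measure_ne_top _ _), measure_univ]
    rw [hXc]
    rw [tsub_le_iff_right]
    have hcover : (1 : ℝ≥0∞) ≤ P {a | t < Y a} + P {ω | Y ω ≤ t} := by
      have : (Set.univ : Set Ω) ⊆ {a | t < Y a} ∪ {ω | Y ω ≤ t} := by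
        intro a _
        rcases lt_or_ge t (Y a) with h | h
        · exact Or.inl h
        · exact Or.inr h
      calc (1 : ℝ≥0∞) = P Set.univ := (measure_univ).symm
        _ ≤ P ({a | t < Y a} ∪ {ω | Y ω ≤ t}) := measure_mono this
        _ ≤ _ := measure_union_le _ _
    exact hcover.trans (add_le_add le_rfl (hdom_le t))
  -- tail comparison for negative parts
  have hneg : ∫⁻ ω, ENNReal.ofReal (-(Y ω)) ∂P ≤ ∫⁻ ω, ENNReal.ofReal (-(X ω)) ∂P := by
    rw [tail_rep P (f := fun ω => -(Y ω)) hYmeas.neg, tail_rep P (f := fun ω => -(X ω)) hX.aemeasurable.neg]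
    apply lintegral_mono fun t => ?_
    have e1 : {a | t < -(Y a)} = {a | Y a < -t} := by ext a; simp [lt_neg]
    have e2 : {a | t < -(X a)} = {a | X a < -t} := by ext a; simp [lt_neg]
    rw [e1, e2]
    exact hdom_lt (-t)
  have hXfin : ∫⁻ ω, ENNReal.ofReal (X ω) ∂P ≠ ⊤ := hXint.lintegral_lt_top.ne
  have hXnfin : ∫⁻ ω, ENNReal.ofReal (-(X ω)) ∂P ≠ ⊤ := hXint.neg.lintegral_lt_top.ne
  have hYfin : ∫⁻ ω, ENNReal.ofReal (Y ω) ∂P ≠ ⊤ := hgint.lintegral_lt_top.ne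
  have hYnfin : ∫⁻ ω, ENNReal.ofReal (-(Y ω)) ∂P ≠ ⊤ := hgint.neg.lintegral_lt_top.ne
  rw [integral_eq_lintegral_pos_part_sub_lintegral_neg_part hXint,
    integral_eq_lintegral_pos_part_sub_lintegral_neg_part hgint]
  apply sub_le_sub
  · exact ENNReal.toReal_mono hYfin hpos
  · exact ENNReal.toReal_mono hXnfin hneg
end

section
/- Let X be a random variable with E[X] = 0 satisfying Pr(|X| > c) ≤ 2·exp(−c²/A²) for all c ≥ 0 and some A > 0. Then X is 9A²-subgaussian, i.e., E[exp(λX)] ≤ exp(9A²λ²/2) for all λ ∈ ℝ. -/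
open MeasureTheory ProbabilityTheory Real

section SubgaussianAux

open Set

private lemma sg_exp_le_add_exp_sq (x : ℝ) : Real.exp x ≤ x + Real.exp (x ^ 2) := by
  rcases le_or_gt |x| 1 with h | h
  · have hb := Real.exp_bound h (n := 2) (by norm_num)
    simp [Finset.sum_range_succ] at hb
    have h1 : Real.exp x ≤ 1 + x + x ^ 2 := by
      have := abs_le.1 hb
      have hx2 : |x| ^ 2 ≤ x ^ 2 := by rw [sq_abs]
      nlinarith [this.2]
    have h2 : (1 : ℝ) + x ^ 2 ≤ Real.exp (x ^ 2) := by
      have := Real.add_one_le_exp (x ^ 2); linarith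
    linarith
  · rcases le_or_gt 0 x with hx | hx
    · have h1 : x ≤ x ^ 2 := by nlinarith [abs_of_nonneg hx]
      have := Real.exp_le_exp.2 h1
      linarith
    · have h1 : Real.exp x ≤ 1 := Real.exp_le_one_iff.2 hx.le
      have h2 : (1 : ℝ) + x ^ 2 ≤ Real.exp (x ^ 2) := by
        have := Real.add_one_le_exp (x ^ 2); linarith
      have : 1 ≤ x + Real.exp (x ^ 2) := by nlinarith [abs_of_neg hx]
      linarith

private lemma sg_key_lintegral {Ω : Type*} [MeasurableSpace Ω] (P : Measure Ω)
    [IsProbabilityMeasure P]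
    (X : Ω → ℝ) (hX : Measurable X) {A s : ℝ} (hA : 0 < A) (hs : 0 < s)
    (hsA : s * A ^ 2 ≤ 1 / 2)
    (htail : ∀ c : ℝ, 0 ≤ c →
      P {ω | c < |X ω|} ≤ ENNReal.ofReal (2 * Real.exp (-c ^ 2 / A ^ 2))) :
    ∫⁻ ω, ENNReal.ofReal (Real.exp (s * X ω ^ 2)) ∂P
      ≤ ENNReal.ofReal ((1 + s * A ^ 2) / (1 - s * A ^ 2)) := by
  have hA2 : (0:ℝ) < A ^ 2 := by positivity
  set q : ℝ := s * A ^ 2 with hq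
  have hq0 : 0 < q := by positivity
  set p : ℝ := 1 / q with hp
  have hp2 : 2 ≤ p := by
    rw [hp, le_div_iff₀ hq0]; linarith
  have hp1 : 1 < p := by linarith
  have hmeas : Measurable fun ω => Real.exp (s * X ω ^ 2) :=
    Real.measurable_exp.comp (measurable_const.mul (hX.pow_const 2))
  rw [lintegral_eq_lintegral_meas_lt P
    (Filter.Eventually.of_forall fun ω => (Real.exp_pos _).le) hmeas.aemeasurable]
  have hsplit : Ioi (0:ℝ) = Ioc 0 1 ∪ Ioi 1 := (Set.Ioc_union_Ioi_eq_Ioi (by norm_num)).symm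
  rw [hsplit, lintegral_union measurableSet_Ioi (Set.Ioc_disjoint_Ioi le_rfl)]
  have h1 : ∫⁻ t in Ioc (0:ℝ) 1, P {a | t < Real.exp (s * X a ^ 2)} ≤ 1 := by
    calc ∫⁻ t in Ioc (0:ℝ) 1, P {a | t < Real.exp (s * X a ^ 2)}
        ≤ ∫⁻ _ in Ioc (0:ℝ) 1, 1 := lintegral_mono fun t => prob_le_one
      _ = 1 := by rw [setLIntegral_one, Real.volume_Ioc]; norm_num
  have h2 : ∫⁻ t in Ioi (1:ℝ), P {a | t < Real.exp (s * X a ^ 2)}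
      ≤ ENNReal.ofReal (2 / (p - 1)) := by
    have hb : ∀ t ∈ Ioi (1:ℝ), P {a | t < Real.exp (s * X a ^ 2)}
        ≤ ENNReal.ofReal (2 * t ^ (-p)) := by
      intro t ht
      have ht1 : (1:ℝ) < t := ht
      have ht0 : (0:ℝ) < t := by linarith
      have hlog : 0 ≤ Real.log t := Real.log_nonneg ht1.le
      set c : ℝ := Real.sqrt (Real.log t / s) with hc
      have hc0 : 0 ≤ c := Real.sqrt_nonneg _
      have hcsq : c ^ 2 = Real.log t / s := Real.sq_sqrt (by positivity)
      have hset : {a | t < Real.exp (s * X a ^ 2)} = {ω | c < |X ω|} := by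
        ext ω
        simp only [mem_setOf_eq]
        rw [← Real.log_lt_iff_lt_exp ht0, ← div_lt_iff₀' hs]
        constructor
        · intro h
          have hx2 : 0 < X ω ^ 2 := lt_of_le_of_lt (by positivity) h
          have hxpos : 0 < |X ω| := by
            rw [abs_pos]
            intro h0
            rw [h0] at hx2
            norm_num at hx2
          rw [hc]
          exact (Real.sqrt_lt' hxpos).2 (by rwa [sq_abs])
        · intro h
          have : c ^ 2 < |X ω| ^ 2 := by nlinarith
          rwa [hcsq, sq_abs] at this
      rw [hset]
      refine le_trans (htail c hc0) ?_
      apply ENNReal.ofReal_le_ofReal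
      have : -c ^ 2 / A ^ 2 = Real.log t * (-p) := by
        rw [hcsq, hp, hq]; field_simp
      rw [this, ← Real.rpow_def_of_pos ht0]
    have hint : IntegrableOn (fun t : ℝ => 2 * t ^ (-p)) (Ioi 1) :=
      (integrableOn_Ioi_rpow_of_lt (by linarith : -p < -1) one_pos).const_mul 2
    calc ∫⁻ t in Ioi (1:ℝ), P {a | t < Real.exp (s * X a ^ 2)}
        ≤ ∫⁻ t in Ioi (1:ℝ), ENNReal.ofReal (2 * t ^ (-p)) := by
          exact setLIntegral_mono' measurableSet_Ioi hb
      _ = ENNReal.ofReal (∫ t in Ioi (1:ℝ), 2 * t ^ (-p)) := by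
          rw [ofReal_integral_eq_lintegral_ofReal hint]
          filter_upwards [ae_restrict_mem measurableSet_Ioi] with t ht
          have : (0:ℝ) < t := lt_trans one_pos ht
          positivity
      _ = ENNReal.ofReal (2 / (p - 1)) := by
          rw [MeasureTheory.integral_const_mul, integral_Ioi_rpow_of_lt (by linarith) one_pos]
          rw [Real.one_rpow]
          congr 1
          rw [show -p + 1 = -(p - 1) by ring, div_neg, neg_div, neg_neg]
          ring
  calc _ ≤ 1 + ENNReal.ofReal (2 / (p - 1)) := add_le_add h1 h2
    _ = ENNReal.ofReal (1 + 2 / (p - 1)) := by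
        rw [ENNReal.ofReal_add (by norm_num) (div_nonneg (by norm_num) (by linarith))]
        norm_num
    _ = ENNReal.ofReal ((1 + q) / (1 - q)) := by
        congr 1
        have hq1 : q < 1 := by linarith
        have hne : 1 - q ≠ 0 := by intro h; simp only [sub_eq_zero] at h; linarith
        have : p - 1 = (1 - q) / q := by rw [hp]; field_simp
        rw [this]
        rw [div_div_eq_mul_div]
        rw [eq_div_iff hne, add_mul, div_mul_cancel₀ _ hne]
        ring

private lemma sg_key_integral {Ω : Type*} [MeasurableSpace Ω] (P : Measure Ω)
    (X : Ω → ℝ) {A s : ℝ} (hX : Measurable X) (hs : 0 < s) (hsA : s * A ^ 2 ≤ 1 / 2)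
    (hkey : ∫⁻ ω, ENNReal.ofReal (Real.exp (s * X ω ^ 2)) ∂P
      ≤ ENNReal.ofReal ((1 + s * A ^ 2) / (1 - s * A ^ 2))) :
    Integrable (fun ω => Real.exp (s * X ω ^ 2)) P ∧
      ∫ ω, Real.exp (s * X ω ^ 2) ∂P ≤ (1 + s * A ^ 2) / (1 - s * A ^ 2) := by
  have hmeas : Measurable fun ω => Real.exp (s * X ω ^ 2) :=
    Real.measurable_exp.comp (measurable_const.mul (hX.pow_const 2))
  have hnn : 0 ≤ᵐ[P] fun ω => Real.exp (s * X ω ^ 2) :=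
    Filter.Eventually.of_forall fun ω => (Real.exp_pos _).le
  have hfin : ∫⁻ ω, ENNReal.ofReal (Real.exp (s * X ω ^ 2)) ∂P < ⊤ :=
    lt_of_le_of_lt hkey ENNReal.ofReal_lt_top
  have hint : Integrable (fun ω => Real.exp (s * X ω ^ 2)) P :=
    ⟨hmeas.aestronglyMeasurable, (hasFiniteIntegral_iff_ofReal hnn).2 hfin⟩
  refine ⟨hint, ?_⟩
  rw [integral_eq_lintegral_of_nonneg_ae hnn hmeas.aestronglyMeasurable]
  have hq1 : s * A ^ 2 < 1 := by linarith
  have hrhs : (0:ℝ) ≤ (1 + s * A ^ 2) / (1 - s * A ^ 2) := by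
    have hsA2 : 0 ≤ s * A ^ 2 := by positivity
    apply div_nonneg <;> linarith
  calc (∫⁻ ω, ENNReal.ofReal (Real.exp (s * X ω ^ 2)) ∂P).toReal
      ≤ (ENNReal.ofReal ((1 + s * A ^ 2) / (1 - s * A ^ 2))).toReal :=
        ENNReal.toReal_mono ENNReal.ofReal_ne_top hkey
    _ = (1 + s * A ^ 2) / (1 - s * A ^ 2) := ENNReal.toReal_ofReal hrhs

private lemma sg_X_integrable {Ω : Type*} [MeasurableSpace Ω] (P : Measure Ω)
    (X : Ω → ℝ) {A : ℝ} (hX : Measurable X) (hA : 0 < A)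
    (hIexp : Integrable (fun ω => Real.exp (1 / (2 * A ^ 2) * X ω ^ 2)) P) :
    Integrable X P := by
  have hA2 : (0:ℝ) < A ^ 2 := by positivity
  refine ((hIexp.const_mul (Real.sqrt 2 * A)).mono hX.aestronglyMeasurable
    (Filter.Eventually.of_forall fun ω => ?_))
  set E := Real.exp (1 / (2 * A ^ 2) * X ω ^ 2) with hE
  have hEpos : 0 < E := Real.exp_pos _
  have hE2 : E ^ 2 = Real.exp (X ω ^ 2 / A ^ 2) := by
    rw [hE, ← Real.exp_nat_mul]
    congr 1
    push_cast
    field_simp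
  have h1 : 1 + X ω ^ 2 / A ^ 2 ≤ E ^ 2 := by
    rw [hE2]
    have := Real.add_one_le_exp (X ω ^ 2 / A ^ 2)
    linarith
  have hx2 : X ω ^ 2 ≤ 2 * A ^ 2 * E ^ 2 := by
    have := (div_le_iff₀ hA2).1 (by linarith : X ω ^ 2 / A ^ 2 ≤ E ^ 2)
    nlinarith
  rw [Real.norm_eq_abs, Real.norm_eq_abs]
  have hrpos : 0 < Real.sqrt 2 * A * E := by positivity
  rw [abs_of_pos hrpos]
  nlinarith [abs_nonneg (X ω), sq_abs (X ω), Real.sq_sqrt (by norm_num : (0:ℝ) ≤ 2),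
    Real.sqrt_nonneg 2]

end SubgaussianAux

theorem tail_bound_implies_subgaussian {Ω : Type*} [MeasureSpace Ω]
    (P : Measure Ω) [IsProbabilityMeasure P]
    (X : Ω → ℝ) (hX : Measurable X)
    (hmean : ∫ ω, X ω ∂P = 0)
    (A : ℝ) (hA : 0 < A)
    (htail : ∀ c : ℝ, 0 ≤ c →
      P {ω | c < |X ω|} ≤ ENNReal.ofReal (2 * Real.exp (-c ^ 2 / A ^ 2))) :
    ∀ l : ℝ, ∫ ω, Real.exp (l * X ω) ∂P ≤ Real.exp (9 * A ^ 2 * l ^ 2 / 2) := by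
  intro l
  have hA2 : (0:ℝ) < A ^ 2 := by positivity
  -- the fixed exponent s₀ = 1/(2A²)
  set s₀ : ℝ := 1 / (2 * A ^ 2) with hs₀def
  have hs₀ : 0 < s₀ := by positivity
  have hs₀A : s₀ * A ^ 2 = 1 / 2 := by rw [hs₀def]; field_simp
  have hkey₀ := sg_key_lintegral P X hX hA hs₀ (le_of_eq hs₀A) htail
  obtain ⟨hIexp₀, hbd₀⟩ := sg_key_integral P X hX hs₀ (le_of_eq hs₀A) hkey₀
  have hbd₀' : ∫ ω, Real.exp (s₀ * X ω ^ 2) ∂P ≤ 3 := by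
    calc ∫ ω, Real.exp (s₀ * X ω ^ 2) ∂P ≤ (1 + s₀ * A ^ 2) / (1 - s₀ * A ^ 2) := hbd₀
      _ = 3 := by rw [hs₀A]; norm_num
  have hXint : Integrable X P := sg_X_integrable P X hX hA hIexp₀
  rcases eq_or_ne l 0 with rfl | hl0
  · simp
  rcases le_or_gt (l ^ 2 * A ^ 2) (1 / 2) with hcase | hcase
  · -- small λ case
    have hs : 0 < l ^ 2 := by positivity
    have hkey := sg_key_lintegral P X hX hA hs hcase htail
    obtain ⟨hIexp, hbd⟩ := sg_key_integral P X hX hs hcase hkey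
    set t : ℝ := l ^ 2 * A ^ 2 with ht
    have ht0 : 0 < t := by positivity
    have hpt : ∀ ω, Real.exp (l * X ω) ≤ l * X ω + Real.exp (l ^ 2 * X ω ^ 2) := by
      intro ω
      have := sg_exp_le_add_exp_sq (l * X ω)
      rwa [mul_pow] at this
    have hR : Integrable (fun ω => l * X ω + Real.exp (l ^ 2 * X ω ^ 2)) P :=
      (hXint.const_mul l).add hIexp
    have hL : Integrable (fun ω => Real.exp (l * X ω)) P := by
      refine hR.mono ((Real.measurable_exp.comp (measurable_const.mul hX)).aestronglyMeasurable)
        (Filter.Eventually.of_forall fun ω => ?_)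
      rw [Real.norm_eq_abs, Real.norm_eq_abs, abs_of_pos (Real.exp_pos _)]
      have h1 := hpt ω
      have h2 : 0 < l * X ω + Real.exp (l ^ 2 * X ω ^ 2) := lt_of_lt_of_le (Real.exp_pos _) h1
      rw [abs_of_pos h2]
      exact h1
    calc ∫ ω, Real.exp (l * X ω) ∂P
        ≤ ∫ ω, (l * X ω + Real.exp (l ^ 2 * X ω ^ 2)) ∂P :=
          integral_mono hL hR hpt
      _ = l * ∫ ω, X ω ∂P + ∫ ω, Real.exp (l ^ 2 * X ω ^ 2) ∂P := by
          rw [integral_add (hXint.const_mul l) hIexp, MeasureTheory.integral_const_mul]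
      _ = ∫ ω, Real.exp (l ^ 2 * X ω ^ 2) ∂P := by rw [hmean]; ring
      _ ≤ (1 + t) / (1 - t) := hbd
      _ ≤ Real.exp (9 * A ^ 2 * l ^ 2 / 2) := by
          have h14 : (1 + t) / (1 - t) ≤ 1 + 4 * t := by
            rw [div_le_iff₀ (by linarith)]
            nlinarith
          have h4e : 1 + 4 * t ≤ Real.exp (4 * t) := by
            have := Real.add_one_le_exp (4 * t); linarith
          have hee : Real.exp (4 * t) ≤ Real.exp (9 * A ^ 2 * l ^ 2 / 2) := by
            apply Real.exp_le_exp.2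
            rw [ht]; nlinarith
          linarith
  · -- large λ case
    set C : ℝ := Real.exp (l ^ 2 * A ^ 2 / 2) with hC
    have hCpos : 0 < C := Real.exp_pos _
    have hpt : ∀ ω, Real.exp (l * X ω) ≤ C * Real.exp (s₀ * X ω ^ 2) := by
      intro ω
      rw [hC, ← Real.exp_add]
      apply Real.exp_le_exp.2
      rw [hs₀def, ← sub_nonneg]
      have expand : l ^ 2 * A ^ 2 / 2 + 1 / (2 * A ^ 2) * X ω ^ 2 - l * X ω
          = (l * A ^ 2 - X ω) ^ 2 / (2 * A ^ 2) := by field_simp; ring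
      rw [expand]
      positivity
    have hL : Integrable (fun ω => Real.exp (l * X ω)) P := by
      refine (hIexp₀.const_mul C).mono
        ((Real.measurable_exp.comp (measurable_const.mul hX)).aestronglyMeasurable)
        (Filter.Eventually.of_forall fun ω => ?_)
      rw [Real.norm_eq_abs, Real.norm_eq_abs, abs_of_pos (Real.exp_pos _),
        abs_of_pos (by positivity)]
      exact hpt ω
    calc ∫ ω, Real.exp (l * X ω) ∂P
        ≤ ∫ ω, C * Real.exp (s₀ * X ω ^ 2) ∂P :=
          integral_mono hL (hIexp₀.const_mul C) hpt
      _ = C * ∫ ω, Real.exp (s₀ * X ω ^ 2) ∂P := MeasureTheory.integral_const_mul _ _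
      _ ≤ C * 3 := by
          apply mul_le_mul_of_nonneg_left hbd₀' hCpos.le
      _ ≤ Real.exp (9 * A ^ 2 * l ^ 2 / 2) := by
          have hsplit : Real.exp (9 * A ^ 2 * l ^ 2 / 2)
              = Real.exp (4 * (l ^ 2 * A ^ 2)) * C := by
            rw [hC, ← Real.exp_add]; ring_nf
          have h3 : (3:ℝ) ≤ Real.exp (4 * (l ^ 2 * A ^ 2)) := by
            have h2 : (3:ℝ) ≤ Real.exp 2 := by
              have := Real.add_one_le_exp (2:ℝ); linarith
            refine h2.trans (Real.exp_le_exp.2 ?_)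
            linarith
          rw [hsplit]
          calc C * 3 ≤ Real.exp (4 * (l ^ 2 * A ^ 2)) * C := by nlinarith
            _ = _ := rfl
end

section
/- Let X follow a chi-square distribution with D degrees of freedom. Then for any c > 0, Pr(X ≥ D + 2√(Dc) + 2c) ≤ exp(−c). Consequently, for δ ∈ (0,1), with probability at least 1 − δ, X ≤ D + 2√(D·log(1/δ)) + 2·log(1/δ). -/
open MeasureTheory ProbabilityTheory Real

/-- The chi-square distribution with `D` degrees of freedom, as the Gamma
distribution with shape `D / 2` and rate `1 / 2`. -/
noncomputable def chiSquareMeasure (D : ℕ) : Measure ℝ :=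
  gammaMeasure ((D : ℝ) / 2) (1 / 2)

open Set

lemma lintegral_exp_mul_gammaPDF {α t : ℝ} (hα : 0 < α) (ht : t < 1/2) :
    ∫⁻ x, ENNReal.ofReal (Real.exp (t * x) * gammaPDFReal α (1/2) x) =
      ENNReal.ofReal (((1:ℝ)/2 / (1/2 - t)) ^ α) := by
  have hβ : (0:ℝ) < 1/2 - t := by linarith
  have hzero : ∫⁻ x in Iio (0:ℝ), ENNReal.ofReal (Real.exp (t * x) * gammaPDFReal α (1/2) x) = 0 := by
    rw [setLIntegral_congr_fun_ae measurableSet_Iio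
      (ae_of_all _ (fun x (hx : x < 0) ↦ by
        rw [gammaPDFReal, if_neg (not_le.mpr hx), mul_zero, ENNReal.ofReal_zero])),
      lintegral_zero]
  have hsplit := lintegral_add_compl
    (fun x ↦ ENNReal.ofReal (Real.exp (t * x) * gammaPDFReal α (1/2) x))
    (measurableSet_Ici (a := (0:ℝ))) (μ := volume)
  rw [compl_Ici, hzero, add_zero] at hsplit
  rw [← hsplit]
  set F : ℝ → ℝ := fun x ↦ (1/2:ℝ) ^ α / Real.Gamma α * (x ^ (α - 1) * Real.exp (-((1/2 - t) * x)))
    with hF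
  have hFeq : ∀ x ∈ Ici (0:ℝ),
      ENNReal.ofReal (Real.exp (t * x) * gammaPDFReal α (1/2) x) = ENNReal.ofReal (F x) := by
    intro x hx
    rw [gammaPDFReal, if_pos (show (0:ℝ) ≤ x from hx), hF]
    congr 1
    have h1 : Real.exp (t * x) * Real.exp (-(1/2 * x)) = Real.exp (-((1/2 - t) * x)) := by
      rw [← Real.exp_add]; ring_nf
    calc Real.exp (t * x) * ((1/2:ℝ) ^ α / Real.Gamma α * x ^ (α - 1) * Real.exp (-(1/2 * x)))
        = (1/2:ℝ) ^ α / Real.Gamma α * (x ^ (α - 1) * (Real.exp (t*x) * Real.exp (-(1/2 * x)))) := by ring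
      _ = _ := by rw [h1]
  rw [setLIntegral_congr_fun_ae measurableSet_Ici (ae_of_all _ hFeq)]
  have h1 : IntegrableOn (fun x : ℝ ↦ x ^ (α - 1) * Real.exp (-((1/2 - t) * x))) (Ioi 0) := by
    have h0 := integrableOn_rpow_mul_exp_neg_mul_rpow (s := α - 1) (p := 1)
      (by linarith) one_pos hβ
    exact h0.congr_fun (fun x hx ↦ by dsimp only; rw [Real.rpow_one, neg_mul]) measurableSet_Ioi
  have hint : IntegrableOn F (Ici (0:ℝ)) := by
    rw [integrableOn_Ici_iff_integrableOn_Ioi]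
    exact h1.const_mul _
  have hnn : 0 ≤ᵐ[volume.restrict (Ici (0:ℝ))] F := by
    refine (ae_restrict_iff' measurableSet_Ici).mpr (ae_of_all _ fun x (hx : 0 ≤ x) ↦ ?_)
    have := Real.Gamma_pos_of_pos hα
    rw [hF]; positivity
  rw [← ofReal_integral_eq_lintegral_ofReal hint hnn]
  congr 1
  rw [hF]
  simp only []
  rw [integral_Ici_eq_integral_Ioi, integral_const_mul,
    Real.integral_rpow_mul_exp_neg_mul_Ioi hα hβ]
  have hG := (Real.Gamma_pos_of_pos hα).ne'
  rw [Real.div_rpow (by norm_num) hβ.le, Real.div_rpow (by norm_num) hβ.le, Real.one_rpow]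
  field_simp

lemma gamma_chernoff {α t a : ℝ} (hα : 0 < α) (ht0 : 0 ≤ t) (ht : t < 1/2) :
    gammaMeasure α (1/2) {x | a ≤ x} ≤
      ENNReal.ofReal (Real.exp (-(t * a)) * ((1:ℝ)/2 / (1/2 - t)) ^ α) := by
  have hset : {x : ℝ | a ≤ x} = Ici a := rfl
  rw [hset, gammaMeasure, withDensity_apply _ measurableSet_Ici]
  have hpt : ∀ x ∈ Ici a, gammaPDF α (1/2) x ≤
      ENNReal.ofReal (Real.exp (-(t * a))) *
        ENNReal.ofReal (Real.exp (t * x) * gammaPDFReal α (1/2) x) := by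
    intro x hx
    rw [← ENNReal.ofReal_mul (Real.exp_nonneg _)]
    apply ENNReal.ofReal_le_ofReal
    have h2 : 1 ≤ Real.exp (-(t * a)) * Real.exp (t * x) := by
      rw [← Real.exp_add]
      apply Real.one_le_exp
      have : a ≤ x := hx
      nlinarith
    have h3 := gammaPDFReal_nonneg hα (by norm_num : (0:ℝ) < 1/2) x
    calc gammaPDFReal α (1/2) x = 1 * gammaPDFReal α (1/2) x := (one_mul _).symm
      _ ≤ (Real.exp (-(t * a)) * Real.exp (t * x)) * gammaPDFReal α (1/2) x := by
          apply mul_le_mul_of_nonneg_right h2 h3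
      _ = Real.exp (-(t * a)) * (Real.exp (t * x) * gammaPDFReal α (1/2) x) := by ring
  calc ∫⁻ x in Ici a, gammaPDF α (1/2) x
      ≤ ∫⁻ x in Ici a, ENNReal.ofReal (Real.exp (-(t * a))) *
          ENNReal.ofReal (Real.exp (t * x) * gammaPDFReal α (1/2) x) :=
        setLIntegral_mono_ae (by
          apply Measurable.aemeasurable
          exact (measurable_const.mul ((Real.measurable_exp.comp
            (measurable_id.const_mul t)).mul (measurable_gammaPDFReal α (1/2))).ennreal_ofReal))
          (ae_of_all _ hpt)
    _ ≤ ∫⁻ x, ENNReal.ofReal (Real.exp (-(t * a))) *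
          ENNReal.ofReal (Real.exp (t * x) * gammaPDFReal α (1/2) x) :=
        setLIntegral_le_lintegral _ _
    _ = ENNReal.ofReal (Real.exp (-(t * a))) *
          ∫⁻ x, ENNReal.ofReal (Real.exp (t * x) * gammaPDFReal α (1/2) x) := by
        rw [lintegral_const_mul]
        exact ((Real.measurable_exp.comp (measurable_id.const_mul t)).mul
          (measurable_gammaPDFReal α (1/2))).ennreal_ofReal
    _ = ENNReal.ofReal (Real.exp (-(t * a)) * ((1:ℝ)/2 / (1/2 - t)) ^ α) := by
        rw [lintegral_exp_mul_gammaPDF hα ht, ← ENNReal.ofReal_mul (Real.exp_nonneg _)]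

lemma laurent_massart_key_ineq (Dr c : ℝ) (hDr : 0 < Dr) (hc : 0 < c) :
    Real.exp (-(((1 - Dr / (Dr + 2 * Real.sqrt (Dr * c) + 2 * c)) / 2) *
        (Dr + 2 * Real.sqrt (Dr * c) + 2 * c))) *
      ((Dr + 2 * Real.sqrt (Dr * c) + 2 * c) / Dr) ^ (Dr / 2) ≤ Real.exp (-c) := by
  set S := Real.sqrt (Dr * c) with hSdef
  have hS0 : 0 < S := Real.sqrt_pos.mpr (by positivity)
  have hS2 : S ^ 2 = Dr * c := Real.sq_sqrt (by positivity)
  set a := Dr + 2 * S + 2 * c with hadef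
  have haD : Dr < a := by nlinarith
  have ha0 : 0 < a := by nlinarith
  have hta : ((1 - Dr / a) / 2) * a = (a - Dr) / 2 := by field_simp
  set x := S / Dr with hxdef
  have hx0 : 0 < x := by positivity
  have hx2 : x ^ 2 = c / Dr := by
    rw [hxdef, div_pow, hS2]; field_simp
  have haDr : a / Dr = 1 + 2 * x + 2 * x ^ 2 := by
    rw [hx2, hxdef, hadef]; field_simp
  have hlog : Real.log (a / Dr) ≤ 2 * x := by
    rw [Real.log_le_iff_le_exp (by positivity), haDr]
    have := Real.quadratic_le_exp_of_nonneg (by positivity : (0:ℝ) ≤ 2 * x)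
    nlinarith
  have hrpow : (a / Dr) ^ (Dr / 2) = Real.exp ((Dr / 2) * Real.log (a / Dr)) := by
    rw [Real.rpow_def_of_pos (by positivity), mul_comm]
  rw [hta, hrpow, ← Real.exp_add, Real.exp_le_exp]
  have hDx : Dr * x = S := by rw [hxdef]; field_simp
  have h1 : (Dr / 2) * Real.log (a / Dr) ≤ S := by
    calc (Dr / 2) * Real.log (a / Dr) ≤ (Dr / 2) * (2 * x) := by
          apply mul_le_mul_of_nonneg_left hlog (by positivity)
      _ = S := by rw [← hDx]; ring
  have : (a - Dr) / 2 = S + c := by rw [hadef]; ring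
  linarith

theorem laurent_massart_chi_square_tail (D : ℕ) (hD : 1 ≤ D) :
    (∀ c : ℝ, 0 < c →
      chiSquareMeasure D {x | (D : ℝ) + 2 * Real.sqrt (D * c) + 2 * c ≤ x} ≤
        ENNReal.ofReal (Real.exp (-c))) ∧
    (∀ δ : ℝ, δ ∈ Set.Ioo (0 : ℝ) 1 →
      1 - ENNReal.ofReal δ ≤
        chiSquareMeasure D
          {x | x ≤ (D : ℝ) + 2 * Real.sqrt (D * Real.log (1 / δ)) + 2 * Real.log (1 / δ)}) := by
  have hDr : (0:ℝ) < D := by exact_mod_cast hD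
  have part1 : ∀ c : ℝ, 0 < c →
      chiSquareMeasure D {x | (D : ℝ) + 2 * Real.sqrt (D * c) + 2 * c ≤ x} ≤
        ENNReal.ofReal (Real.exp (-c)) := by
    intro c hc
    set Dr : ℝ := (D : ℝ) with hDrdef
    set a : ℝ := Dr + 2 * Real.sqrt (Dr * c) + 2 * c with hadef
    set t : ℝ := (1 - Dr / a) / 2 with htdef
    have hS0 : 0 ≤ Real.sqrt (Dr * c) := Real.sqrt_nonneg _
    have haD : Dr < a := by rw [hadef]; nlinarith
    have ha0 : 0 < a := by linarith
    have hfrac0 : 0 < Dr / a := by positivity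
    have hfrac1 : Dr / a < 1 := (div_lt_one ha0).mpr haD
    have ht0 : 0 ≤ t := by rw [htdef]; linarith
    have ht : t < 1/2 := by rw [htdef]; linarith
    have hhalf : (1:ℝ)/2 / (1/2 - t) = a / Dr := by
      rw [htdef]
      rw [show (1:ℝ)/2 - (1 - Dr / a) / 2 = (Dr / a) / 2 by ring]
      field_simp
    have hch := gamma_chernoff (α := Dr / 2) (t := t) (a := a) (by positivity) ht0 ht
    rw [hhalf] at hch
    have hkey := laurent_massart_key_ineq Dr c hDr hc
    rw [← hadef, ← htdef] at hkey
    exact hch.trans (ENNReal.ofReal_le_ofReal hkey)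
  refine ⟨part1, fun δ hδ ↦ ?_⟩
  obtain ⟨hδ0, hδ1⟩ := hδ
  set c : ℝ := Real.log (1 / δ) with hcdef
  have hc : 0 < c := Real.log_pos (by rw [lt_div_iff₀ hδ0]; linarith)
  have hexp : Real.exp (-c) = δ := by
    rw [hcdef, one_div, Real.log_inv, neg_neg, Real.exp_log hδ0]
  have h1 := part1 c hc
  rw [hexp] at h1
  haveI : IsProbabilityMeasure (chiSquareMeasure D) :=
    isProbabilityMeasure_gammaMeasure (by positivity) (by norm_num)
  set a : ℝ := (D : ℝ) + 2 * Real.sqrt (D * c) + 2 * c with hadef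
  have hcompl : chiSquareMeasure D (Set.Iic a) + chiSquareMeasure D ((Set.Iic a)ᶜ) = 1 :=
    by rw [measure_add_measure_compl measurableSet_Iic, measure_univ]
  have h2 : chiSquareMeasure D ((Set.Iic a)ᶜ) ≤ ENNReal.ofReal δ := by
    refine le_trans (measure_mono ?_) h1
    intro x hx
    exact le_of_lt (by simpa using hx)
  calc 1 - ENNReal.ofReal δ ≤ 1 - chiSquareMeasure D ((Set.Iic a)ᶜ) := tsub_le_tsub_left h2 1
    _ = chiSquareMeasure D (Set.Iic a) :=
        (ENNReal.eq_sub_of_add_eq (measure_ne_top _ _) hcompl).symm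
    _ = chiSquareMeasure D {x | x ≤ a} := rfl
end
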